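/- arXiv:2104.06717 — 2 statements merged into one kernel-verified Lean document; each statement's English description precedes it below -/
import Mathlib

section
/- If f(z) = ∑_{n=0}^∞ a_n z^n is analytic on the unit disk with |f| ≤ 1, then for every n ≥ 1, |a_n| ≤ 1 − |a_0|². -/
/-!
For `n = 1` this is the Schwarz–Pick inequality at the centre: composing `f` with the disk
automorphism `w ↦ (w - a₀) / (1 - conj a₀ * w)` gives a self-map of the disk vanishing at `0`
whose derivative there is `a₁ / (1 - |a₀|²)`, and the Schwarz lemma bounds it by `1`
(if `|a₀| = 1`, `f` is constant by the maximum modulus principle).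

For general `n`, averaging `f` over the rotations `z ↦ ζʲ z` by the `n`-th roots of unity kills
every coefficient whose index is not a multiple of `n`, so `g(w) = ∑ₘ a_{nm} wᵐ` satisfies
`g(zⁿ) = (1/n) ∑ⱼ f(ζʲ z)`. Hence `|g| ≤ 1` on the disk, and the case `n = 1` applied to `g`
gives `|aₙ| ≤ 1 - |a₀|²`.
-/

open Metric

open Set Topology Finset ComplexConjugate NNReal

theorem hasFPowerSeriesOnBall_ofScalars_of_hasSum {f : ℂ → ℂ} {a : ℕ → ℂ} {r : ℝ≥0}
    (hr : 0 < r) (hf : ∀ z ∈ ball (0 : ℂ) r, HasSum (fun n => a n * z ^ n) (f z)) :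
    HasFPowerSeriesOnBall f (FormalMultilinearSeries.ofScalars ℂ a) 0 r where
  r_le := by
    refine ENNReal.le_of_forall_nnreal_lt fun ρ hρ => ?_
    have hρ_mem : (ρ : ℂ) ∈ ball (0 : ℂ) r := by simpa using hρ
    refine FormalMultilinearSeries.le_radius_of_tendsto _ (l := 0) ?_
    simpa [FormalMultilinearSeries.ofScalars_norm] using
      (hf _ hρ_mem).summable.tendsto_atTop_zero.norm
  r_pos := by simpa using hr
  hasSum {z} hz := by
    simpa [FormalMultilinearSeries.ofScalars_apply_eq, mul_comm] using hf z (by simpa using hz)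

noncomputable def blaschkeFactor (c w : ℂ) : ℂ := (w - c) / (1 - conj c * w)

section blaschkeFactor

variable {c w : ℂ}

theorem one_sub_conj_mul_ne_zero (hc : ‖c‖ < 1) (hw : ‖w‖ ≤ 1) : 1 - conj c * w ≠ 0 := by
  refine sub_ne_zero.mpr fun h => ?_
  have : ‖conj c * w‖ < 1 := by
    rw [norm_mul, Complex.norm_conj]
    nlinarith [norm_nonneg c, norm_nonneg w]
  simp [← h] at this

theorem norm_one_sub_conj_mul_sq_sub_norm_sub_sq (c w : ℂ) :
    ‖1 - conj c * w‖ ^ 2 - ‖w - c‖ ^ 2 = (1 - ‖c‖ ^ 2) * (1 - ‖w‖ ^ 2) := by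
  simp only [← Complex.normSq_eq_norm_sq, Complex.normSq_apply, Complex.sub_re, Complex.sub_im,
    Complex.mul_re, Complex.mul_im, Complex.one_re, Complex.one_im, Complex.conj_re,
    Complex.conj_im]
  ring

theorem norm_blaschkeFactor_le_one (hc : ‖c‖ < 1) (hw : ‖w‖ ≤ 1) :
    ‖blaschkeFactor c w‖ ≤ 1 := by
  have hsq : ‖w - c‖ ^ 2 ≤ ‖1 - conj c * w‖ ^ 2 := by
    have hprod : 0 ≤ (1 - ‖c‖ ^ 2) * (1 - ‖w‖ ^ 2) :=
      mul_nonneg (by nlinarith [norm_nonneg c]) (by nlinarith [norm_nonneg w])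
    linarith [norm_one_sub_conj_mul_sq_sub_norm_sub_sq c w]
  rw [blaschkeFactor, norm_div, div_le_one (norm_pos_iff.mpr (one_sub_conj_mul_ne_zero hc hw))]
  exact (pow_le_pow_iff_left₀ (norm_nonneg _) (norm_nonneg _) two_ne_zero).mp hsq

@[simp]
theorem blaschkeFactor_self (c : ℂ) : blaschkeFactor c c = 0 := by
  simp [blaschkeFactor]

theorem hasDerivAt_blaschkeFactor_self (hc : ‖c‖ < 1) :
    HasDerivAt (blaschkeFactor c) (((1 - ‖c‖ ^ 2 : ℝ) : ℂ)⁻¹) c := by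
  have hden := one_sub_conj_mul_ne_zero hc hc.le
  refine (((hasDerivAt_id c).sub_const c).div
    (((hasDerivAt_id c).const_mul (conj c)).const_sub 1) hden).congr_deriv ?_
  rw [id, sub_self, zero_mul, sub_zero, one_mul, pow_two, div_mul_cancel_left₀ hden,
    Complex.conj_mul', Complex.ofReal_sub, Complex.ofReal_one, Complex.ofReal_pow]

theorem differentiableAt_blaschkeFactor (hc : ‖c‖ < 1) (hw : ‖w‖ ≤ 1) :
    DifferentiableAt ℂ (blaschkeFactor c) w :=
  (differentiableAt_id.sub_const c).div ((differentiableAt_id.const_mul _).const_sub 1)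
    (one_sub_conj_mul_ne_zero hc hw)

end blaschkeFactor

theorem norm_deriv_le_one_sub_sq_of_mapsTo {g : ℂ → ℂ} {c : ℂ}
    (hd : DifferentiableOn ℂ g (ball c 1)) (hg : MapsTo g (ball c 1) (closedBall 0 1)) :
    ‖deriv g c‖ ≤ 1 - ‖g c‖ ^ 2 := by
  have hc : c ∈ ball c 1 := mem_ball_self one_pos
  have hgc : ‖g c‖ ≤ 1 := by simpa using hg hc
  rcases hgc.eq_or_lt with hgc | hgc
  · have hmax : IsMaxOn (norm ∘ g) (ball c 1) c := fun z hz => by simpa [hgc] using hg hz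
    have hconst : g =ᶠ[𝓝 c] fun _ => g c := by
      filter_upwards [isOpen_ball.mem_nhds hc] with z hz using
        Complex.eqOn_of_isPreconnected_of_isMaxOn_norm (convex_ball c 1).isPreconnected
          isOpen_ball hd hc hmax hz
    simp [hconst.deriv_eq, hgc]
  · set F := blaschkeFactor (g c) ∘ g
    have hF : HasDerivAt F (((1 - ‖g c‖ ^ 2 : ℝ) : ℂ)⁻¹ * deriv g c) c :=
      (hasDerivAt_blaschkeFactor_self hgc).comp c
        (hd.differentiableAt (isOpen_ball.mem_nhds hc)).hasDerivAt
    have hFd : DifferentiableOn ℂ F (ball c 1) := fun z hz =>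
      (differentiableAt_blaschkeFactor hgc (by simpa using hg hz)).comp_differentiableWithinAt z
        (hd z hz)
    have hFmaps : MapsTo F (ball c 1) (closedBall (F c) 1) := fun z hz => by
      simpa [F] using norm_blaschkeFactor_le_one hgc (by simpa using hg hz)
    have hSchwarz := Complex.norm_deriv_le_one_of_mapsTo_ball hFd hFmaps one_pos
    have hpos : 0 < 1 - ‖g c‖ ^ 2 := by nlinarith [norm_nonneg (g c)]
    rwa [hF.deriv, norm_mul, norm_inv, Complex.norm_real, Real.norm_of_nonneg hpos.le,
      inv_mul_le_iff₀ hpos, mul_one] at hSchwarz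

theorem norm_coeff_one_le_one_sub_sq {f : ℂ → ℂ} {a : ℕ → ℂ}
    (hexp : ∀ z ∈ ball (0 : ℂ) 1, HasSum (fun n => a n * z ^ n) (f z))
    (hb : ∀ z ∈ ball (0 : ℂ) 1, ‖f z‖ ≤ 1) : ‖a 1‖ ≤ 1 - ‖a 0‖ ^ 2 := by
  have hp : HasFPowerSeriesOnBall f (FormalMultilinearSeries.ofScalars ℂ a) 0 (1 : ℝ≥0) :=
    hasFPowerSeriesOnBall_ofScalars_of_hasSum one_pos (by simpa using hexp)
  have hd : DifferentiableOn ℂ f (ball 0 1) := by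
    simpa only [Metric.eball_coe, NNReal.coe_one] using hp.differentiableOn
  have h0 : a 0 = f 0 := by simpa using hp.coeff_zero ![]
  have h1 : a 1 = deriv f 0 := by simpa using hp.hasFPowerSeriesAt.deriv.symm
  rw [h0, h1]
  exact norm_deriv_le_one_sub_sq_of_mapsTo hd fun z hz => by simpa using hb z hz

theorem IsPrimitiveRoot.geom_sum_pow_eq_ite {K : Type*} [Field K] {ζ : K} {n : ℕ}
    (hζ : IsPrimitiveRoot ζ n) (k : ℕ) :
    ∑ j ∈ range n, (ζ ^ k) ^ j = if n ∣ k then (n : K) else 0 := by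
  split_ifs with hk
  · simp [(hζ.pow_eq_one_iff_dvd k).mpr hk]
  · have hζk : (ζ ^ k) ^ n = 1 := by rw [← pow_mul, mul_comm, pow_mul, hζ.pow_eq_one, one_pow]
    rw [geom_sum_eq (mt (hζ.pow_eq_one_iff_dvd k).mp hk), hζk, sub_self, zero_div]

theorem hasSum_coeff_mul_pow_mul_of_isPrimitiveRoot {K : Type*} [Field K] [TopologicalSpace K]
    [IsTopologicalRing K] [CharZero K] {f : K → K} {a : ℕ → K} {ζ z : K} {n : ℕ} (hn : n ≠ 0)
    (hζ : IsPrimitiveRoot ζ n)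
    (hf : ∀ j ∈ range n, HasSum (fun k => a k * (ζ ^ j * z) ^ k) (f (ζ ^ j * z))) :
    HasSum (fun m => a (n * m) * z ^ (n * m)) ((n : K)⁻¹ * ∑ j ∈ range n, f (ζ ^ j * z)) := by
  have hterm (k : ℕ) : ∑ j ∈ range n, a k * (ζ ^ j * z) ^ k =
      if n ∣ k then (n : K) * (a k * z ^ k) else 0 := by
    calc ∑ j ∈ range n, a k * (ζ ^ j * z) ^ k = a k * z ^ k * ∑ j ∈ range n, (ζ ^ k) ^ j := by
          rw [mul_sum]
          exact sum_congr rfl fun j _ => by ring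
      _ = _ := by rw [hζ.geom_sum_pow_eq_ite]; split_ifs <;> ring
  have hsum := hasSum_sum hf
  simp_rw [hterm] at hsum
  have hmul : Function.Injective (n * ·) := mul_right_injective₀ hn
  rw [← hmul.hasSum_iff fun k hk => if_neg fun ⟨m, hm⟩ => hk ⟨m, hm.symm⟩] at hsum
  simpa [Function.comp_def, inv_mul_cancel_left₀ (Nat.cast_ne_zero.mpr hn : (n : K) ≠ 0)] using
    hsum.mul_left (n : K)⁻¹

theorem exists_hasSum_coeff_mul_mul_pow_and_norm_le_one {f : ℂ → ℂ} {a : ℕ → ℂ} {n : ℕ}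
    (hn : n ≠ 0) (hexp : ∀ z ∈ ball (0 : ℂ) 1, HasSum (fun k => a k * z ^ k) (f z))
    (hb : ∀ z ∈ ball (0 : ℂ) 1, ‖f z‖ ≤ 1) {w : ℂ} (hw : w ∈ ball (0 : ℂ) 1) :
    ∃ s, HasSum (fun m => a (n * m) * w ^ m) s ∧ ‖s‖ ≤ 1 := by
  obtain ⟨z, rfl⟩ := IsAlgClosed.exists_pow_nat_eq w (Nat.pos_of_ne_zero hn)
  have hz : ‖z‖ < 1 := by simpa [pow_lt_one_iff_of_nonneg (norm_nonneg z) hn] using hw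
  obtain ⟨ζ, hζ⟩ : ∃ ζ : ℂ, IsPrimitiveRoot ζ n := ⟨_, Complex.isPrimitiveRoot_exp n hn⟩
  have hmem (j : ℕ) : ζ ^ j * z ∈ ball (0 : ℂ) 1 := by simpa [hζ.norm'_eq_one hn] using hz
  refine ⟨_, by simpa only [pow_mul] using
    hasSum_coeff_mul_pow_mul_of_isPrimitiveRoot hn hζ fun j _ => hexp _ (hmem j), ?_⟩
  calc ‖(n : ℂ)⁻¹ * ∑ j ∈ range n, f (ζ ^ j * z)‖ ≤ (n : ℝ)⁻¹ * ∑ _j ∈ range n, 1 := by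
        rw [norm_mul, norm_inv, Complex.norm_natCast]
        gcongr
        exact norm_sum_le_of_le _ fun j _ => hb _ (hmem j)
    _ = 1 := by simp [hn]

theorem coeff_bound_general (f : ℂ → ℂ) (a : ℕ → ℂ)
    (hexp : ∀ z ∈ ball (0 : ℂ) 1, HasSum (fun n => a n * z ^ n) (f z))
    (hb : ∀ z ∈ ball (0 : ℂ) 1, ‖f z‖ ≤ 1) :
    ∀ n : ℕ, 1 ≤ n → ‖a n‖ ≤ 1 - ‖a 0‖ ^ 2 := by
  intro n hn
  have hsub (w : ℂ) (hw : w ∈ ball (0 : ℂ) 1) :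
      HasSum (fun m => a (n * m) * w ^ m) (∑' m, a (n * m) * w ^ m) ∧
        ‖∑' m, a (n * m) * w ^ m‖ ≤ 1 := by
    obtain ⟨s, hs, hs_le⟩ := exists_hasSum_coeff_mul_mul_pow_and_norm_le_one
      (Nat.one_le_iff_ne_zero.mp hn) hexp hb hw
    rw [hs.tsum_eq]
    exact ⟨hs, hs_le⟩
  simpa using norm_coeff_one_le_one_sub_sq (fun w hw => (hsub w hw).1) (fun w hw => (hsub w hw).2)

/-- Schwarz–Pick coefficient bound: if `f = ∑ aₙ zⁿ` is analytic on the unit disk with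
`|f| ≤ 1`, then `|aₙ| ≤ 1 - |a₀|²` for all `n ≥ 1`. -/
theorem coeff_bound (f : ℂ → ℂ) (a : ℕ → ℂ)
    (hexp : ∀ z ∈ ball (0 : ℂ) 1, HasSum (fun n => a n * z ^ n) (f z))
    (hana : AnalyticOn ℂ f (ball (0 : ℂ) 1))
    (hb : ∀ z ∈ ball (0 : ℂ) 1, ‖f z‖ ≤ 1) :
    ∀ n : ℕ, 1 ≤ n → ‖a n‖ ≤ 1 - ‖a 0‖ ^ 2 :=
  coeff_bound_general f a hexp hb
end

section
/- Let f(z) = ∑_{n=0}^∞ a_n z^n be analytic on the unit disk with |f| ≤ 1, let k ≥ 1 be an integer and p ∈ (0,2]. Then |a_0|^p + ∑_{n=1}^∞ |a_{kn}| r^{kn} ≤ 1 for all r ≤ (p/(2+p))^{1/k}, and this radius is sharp. -/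
/-!
The upper bound rests on Wiener's inequality `‖a m‖ ≤ 1 - ‖a 0‖²` for `m ≥ 1`: averaging `f`
over the rotations by the `m`-th roots of unity gives `g (z ^ m)`, where `g u = ∑ a (m t) u ^ t`
is again bounded by `1`, and the Schwarz–Pick lemma at the origin gives `‖g' 0‖ ≤ 1 - ‖g 0‖²`.
With `ρ = r ^ k ≤ p / (2 + p)` the geometric majorant gives
`∑ ‖a (k n)‖ r ^ (k n) ≤ (1 - ‖a 0‖²) ρ / (1 - ρ) ≤ (p / 2) (1 - ‖a 0‖²)`, and Bernoulli's
inequality gives `‖a 0‖ ^ p ≤ 1 - (p / 2) (1 - ‖a 0‖²)`.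

For sharpness, `f z = (a - z ^ k) / (1 - a z ^ k)` turns the left side into
`F a = a ^ p + (1 - a²) ρ / (1 - a ρ)`. Since `F 1 = 1` and `F' 1 = p - 2ρ / (1 - ρ) < 0` once
`ρ > p / (2 + p)`, we get `F a > 1` for `a` slightly below `1`.
-/

open Metric Complex ComplexConjugate Finset Filter Topology

theorem Complex.norm_sub_le_norm_one_sub_conj_mul {c w : ℂ} (hc : ‖c‖ ≤ 1) (hw : ‖w‖ ≤ 1) :
    ‖w - c‖ ≤ ‖1 - conj c * w‖ := by
  have hnormSq : normSq (1 - conj c * w) - normSq (w - c) = (1 - normSq c) * (1 - normSq w) := by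
    apply ofReal_injective
    push_cast [← mul_conj]
    simp only [map_sub, map_mul, map_one, conj_conj]
    ring
  have hc' : normSq c ≤ 1 := by rw [← Complex.sq_norm]; exact pow_le_one₀ (norm_nonneg c) hc
  have hw' : normSq w ≤ 1 := by rw [← Complex.sq_norm]; exact pow_le_one₀ (norm_nonneg w) hw
  rw [norm_def, norm_def]
  exact Real.sqrt_le_sqrt (by nlinarith)

theorem Complex.hasDerivAt_mobius {c : ℂ} (hc : ‖c‖ < 1) :
    HasDerivAt (fun w => (w - c) / (1 - conj c * w)) (((1 - ‖c‖ ^ 2 : ℝ) : ℂ)⁻¹) c := by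
  have hden : (1 : ℂ) - conj c * c = ((1 - ‖c‖ ^ 2 : ℝ) : ℂ) := by
    rw [Complex.sq_norm, ofReal_sub, normSq_eq_conj_mul_self, ofReal_one]
  have hne : ((1 - ‖c‖ ^ 2 : ℝ) : ℂ) ≠ 0 := by
    rw [ofReal_ne_zero, sub_ne_zero]; nlinarith [norm_nonneg c]
  refine (((hasDerivAt_id c).sub_const c).div (((hasDerivAt_id c).const_mul (conj c)).const_sub 1)
    (by rwa [id, hden])).congr_deriv ?_
  simp only [id_eq, sub_self, zero_mul, sub_zero, one_mul, mul_one, hden]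
  field_simp

theorem norm_deriv_le_one_sub_sq {g : ℂ → ℂ} (hd : DifferentiableOn ℂ g (ball 0 1))
    (hb : ∀ z ∈ ball (0 : ℂ) 1, ‖g z‖ ≤ 1) : ‖deriv g 0‖ ≤ 1 - ‖g 0‖ ^ 2 := by
  have h0 : (0 : ℂ) ∈ ball (0 : ℂ) 1 := mem_ball_self one_pos
  rcases (hb 0 h0).eq_or_lt with hc | hc
  · have hmax : IsMaxOn (norm ∘ g) (ball 0 1) 0 := fun z hz => by simpa [hc] using hb z hz
    have hconst : g =ᶠ[𝓝 0] fun _ => g 0 :=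
      Filter.mem_of_superset (isOpen_ball.mem_nhds h0) <| eqOn_of_isPreconnected_of_isMaxOn_norm
        (convex_ball 0 1).isPreconnected isOpen_ball hd h0 hmax
    simp [hconst.deriv_eq, hc]
  -- Compose with the disc automorphism sending `g 0` to `0` and apply the Schwarz lemma.
  set c := g 0
  have hden : ∀ z ∈ ball (0 : ℂ) 1, 1 - conj c * g z ≠ 0 := fun z hz h => by
    have : ‖conj c * g z‖ < 1 := by
      rw [norm_mul, norm_conj]; nlinarith [hb z hz, norm_nonneg c, norm_nonneg (g z)]
    rw [← sub_eq_zero.mp h, norm_one] at this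
    exact this.false
  set G := fun w => (w - c) / (1 - conj c * w)
  have hGd : DifferentiableOn ℂ (G ∘ g) (ball 0 1) :=
    (hd.sub_const c).div ((differentiableOn_const 1).sub (hd.const_mul _)) hden
  have hGb : Set.MapsTo (G ∘ g) (ball 0 1) (closedBall ((G ∘ g) 0) 1) := fun z hz => by
    simp only [G, Function.comp, c, sub_self, zero_div, mem_closedBall_zero_iff, norm_div]
    exact div_le_one_of_le₀ (norm_sub_le_norm_one_sub_conj_mul hc.le (hb z hz)) (norm_nonneg _)
  have hschwarz := Complex.norm_deriv_le_one_of_mapsTo_ball hGd hGb one_pos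
  have hpos : 0 < 1 - ‖c‖ ^ 2 := by nlinarith [norm_nonneg c]
  have hg : HasDerivAt g (deriv g 0) 0 := (hd.differentiableAt (isOpen_ball.mem_nhds h0)).hasDerivAt
  rwa [((hasDerivAt_mobius hc).comp 0 hg).deriv, norm_mul, norm_inv, norm_real,
    Real.norm_of_nonneg hpos.le, inv_mul_le_iff₀ hpos, mul_one] at hschwarz

theorem hasFPowerSeriesOnBall_ofScalars {c : ℕ → ℂ} {φ : ℂ → ℂ}
    (hsum : ∀ u ∈ ball (0 : ℂ) 1, HasSum (fun t => c t * u ^ t) (φ u)) :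
    HasFPowerSeriesOnBall φ (FormalMultilinearSeries.ofScalars ℂ c) 0 1 where
  r_le := ENNReal.le_of_forall_nnreal_lt fun r hr => by
    have hu : ((r : ℝ) : ℂ) ∈ ball (0 : ℂ) 1 := by simpa using hr
    refine FormalMultilinearSeries.le_radius_of_tendsto _ (l := 0) ?_
    simpa [FormalMultilinearSeries.ofScalars_norm] using
      (hsum _ hu).summable.tendsto_atTop_zero.norm
  r_pos := one_pos
  hasSum {u} hu := by
    rw [← ENNReal.coe_one, Metric.eball_coe, NNReal.coe_one] at hu
    simpa [FormalMultilinearSeries.ofScalars_apply_eq, mul_comm] using hsum u hu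

theorem norm_coeff_one_le_one_sub_sq_s12 {c : ℕ → ℂ} {φ : ℂ → ℂ}
    (hsum : ∀ u ∈ ball (0 : ℂ) 1, HasSum (fun t => c t * u ^ t) (φ u))
    (hb : ∀ u ∈ ball (0 : ℂ) 1, ‖φ u‖ ≤ 1) : ‖c 1‖ ≤ 1 - ‖c 0‖ ^ 2 := by
  have hφ := hasFPowerSeriesOnBall_ofScalars hsum
  have hdiff : DifferentiableOn ℂ φ (ball 0 1) := by
    simpa [← ENNReal.coe_one, Metric.eball_coe] using hφ.differentiableOn
  have h0 : φ 0 = c 0 := by simpa using (hφ.coeff_zero ![]).symm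
  simpa [hφ.hasFPowerSeriesAt.deriv, h0] using norm_deriv_le_one_sub_sq hdiff hb

theorem IsPrimitiveRoot.sum_pow_mul_eq_ite {R : Type*} [CommRing R] [IsDomain R] {ζ : R} {m : ℕ}
    (hζ : IsPrimitiveRoot ζ m) (n : ℕ) :
    ∑ j ∈ range m, ζ ^ (j * n) = if m ∣ n then (m : R) else 0 := by
  simp_rw [mul_comm _ n, pow_mul]
  split_ifs with hmn
  · simp [(hζ.pow_eq_one_iff_dvd n).mpr hmn]
  · have hne : ζ ^ n - 1 ≠ 0 := sub_ne_zero.mpr fun h => hmn ((hζ.pow_eq_one_iff_dvd n).mp h)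
    have hpow : (ζ ^ n) ^ m = 1 := by rw [← pow_mul, mul_comm, pow_mul, hζ.pow_eq_one, one_pow]
    have := geom_sum_mul (ζ ^ n) m
    rw [hpow, sub_self] at this
    exact (mul_eq_zero.mp this).resolve_right hne

theorem IsPrimitiveRoot.pow_mul_mem_ball {ζ : ℂ} {m : ℕ} (hζ : IsPrimitiveRoot ζ m) (hm : m ≠ 0)
    (j : ℕ) {z : ℂ} {r : ℝ} (hz : z ∈ ball (0 : ℂ) r) : ζ ^ j * z ∈ ball (0 : ℂ) r := by
  simpa [norm_mul, norm_pow, hζ.norm'_eq_one hm] using hz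

theorem Real.rpow_le_one_sub_mul_one_sub_sq {A p : ℝ} (hA : 0 ≤ A) (hp0 : 0 ≤ p) (hp2 : p ≤ 2) :
    A ^ p ≤ 1 - p / 2 * (1 - A ^ 2) := by
  have h := rpow_one_add_le_one_add_mul_self (s := A ^ 2 - 1) (by nlinarith) (p := p / 2)
    (by linarith) (by linarith)
  rw [add_sub_cancel] at h
  calc A ^ p = (A ^ 2) ^ (p / 2) := by
        rw [← Real.rpow_natCast, ← Real.rpow_mul hA]; ring_nf
    _ ≤ 1 + p / 2 * (A ^ 2 - 1) := h
    _ = 1 - p / 2 * (1 - A ^ 2) := by ring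

theorem tsum_mul_pow_succ_le {b : ℕ → ℝ} {B ρ : ℝ} (hb0 : ∀ n, 0 ≤ b n) (hb : ∀ n, b n ≤ B)
    (hρ0 : 0 ≤ ρ) (hρ1 : ρ < 1) : ∑' n, b n * ρ ^ (n + 1) ≤ B * (ρ / (1 - ρ)) := by
  have hgeom : HasSum (fun n => B * ρ * ρ ^ n) (B * ρ * (1 - ρ)⁻¹) :=
    (hasSum_geometric_of_lt_one hρ0 hρ1).mul_left _
  have hle : ∀ n, b n * ρ ^ (n + 1) ≤ B * ρ * ρ ^ n := fun n => by
    rw [pow_succ]; nlinarith [hb n, pow_nonneg hρ0 n, mul_nonneg (pow_nonneg hρ0 n) hρ0]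
  have hsumm : Summable fun n => b n * ρ ^ (n + 1) :=
    hgeom.summable.of_nonneg_of_le (fun n => mul_nonneg (hb0 n) (pow_nonneg hρ0 _)) hle
  calc ∑' n, b n * ρ ^ (n + 1) ≤ B * ρ * (1 - ρ)⁻¹ :=
        (hsumm.tsum_le_tsum hle hgeom.summable).trans_eq hgeom.tsum_eq
    _ = B * (ρ / (1 - ρ)) := by ring

section Bounded

variable {f : ℂ → ℂ} {a : ℕ → ℂ}

theorem hasSum_coeff_mul_mul_pow_pow_of_isPrimitiveRoot
    (hsum : ∀ z ∈ ball (0 : ℂ) 1, HasSum (fun n => a n * z ^ n) (f z)) {m : ℕ} {ζ : ℂ}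
    (hζ : IsPrimitiveRoot ζ m) (hm : m ≠ 0) {z : ℂ} (hz : z ∈ ball (0 : ℂ) 1) :
    HasSum (fun t => a (m * t) * (z ^ m) ^ t) ((m : ℂ)⁻¹ * ∑ j ∈ range m, f (ζ ^ j * z)) := by
  have havg : HasSum (fun n => (if m ∣ n then (m : ℂ) else 0) * (a n * z ^ n))
      (∑ j ∈ range m, f (ζ ^ j * z)) := by
    refine (hasSum_sum fun j _ => hsum _ (hζ.pow_mul_mem_ball hm j hz)).congr_fun fun n => ?_
    simp_rw [← hζ.sum_pow_mul_eq_ite, sum_mul, mul_pow, ← pow_mul]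
    exact sum_congr rfl fun j _ => by ring
  have hinj : Function.Injective (m * ·) := mul_right_injective₀ hm
  have := ((hinj.hasSum_iff fun n hn => ?_).mpr havg).mul_left (m : ℂ)⁻¹
  · refine this.congr_fun fun t => ?_
    simp [pow_mul, ← mul_assoc, hm]
  · rw [if_neg fun ⟨t, ht⟩ => hn ⟨t, ht.symm⟩, zero_mul]

theorem exists_hasSum_coeff_mul_mul_pow_norm_le_one
    (hsum : ∀ z ∈ ball (0 : ℂ) 1, HasSum (fun n => a n * z ^ n) (f z))
    (hb : ∀ z ∈ ball (0 : ℂ) 1, ‖f z‖ ≤ 1) {m : ℕ} (hm : m ≠ 0) {u : ℂ} (hu : u ∈ ball (0 : ℂ) 1) :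
    ∃ S, HasSum (fun t => a (m * t) * u ^ t) S ∧ ‖S‖ ≤ 1 := by
  obtain ⟨z, rfl⟩ := IsAlgClosed.exists_pow_nat_eq u (Nat.pos_of_ne_zero hm)
  have hz : z ∈ ball (0 : ℂ) 1 := by
    rw [mem_ball_zero_iff, norm_pow] at hu
    exact mem_ball_zero_iff.mpr ((pow_lt_one_iff_of_nonneg (norm_nonneg z) hm).mp hu)
  set ζ := cexp (2 * Real.pi * I / m)
  have hζ : IsPrimitiveRoot ζ m := Complex.isPrimitiveRoot_exp m hm
  refine ⟨_, hasSum_coeff_mul_mul_pow_pow_of_isPrimitiveRoot hsum hζ hm hz, ?_⟩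
  calc ‖(m : ℂ)⁻¹ * ∑ j ∈ range m, f (ζ ^ j * z)‖
      ≤ (m : ℝ)⁻¹ * ∑ j ∈ range m, ‖f (ζ ^ j * z)‖ := by
        rw [norm_mul, norm_inv, Complex.norm_natCast]; gcongr; exact norm_sum_le _ _
    _ ≤ (m : ℝ)⁻¹ * ∑ j ∈ range m, 1 := by gcongr with j; exact hb _ (hζ.pow_mul_mem_ball hm j hz)
    _ = 1 := by simp [hm]

theorem norm_coeff_le_one_sub_sq (hsum : ∀ z ∈ ball (0 : ℂ) 1, HasSum (fun n => a n * z ^ n) (f z))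
    (hb : ∀ z ∈ ball (0 : ℂ) 1, ‖f z‖ ≤ 1) {m : ℕ} (hm : m ≠ 0) : ‖a m‖ ≤ 1 - ‖a 0‖ ^ 2 := by
  have hslice : ∀ u ∈ ball (0 : ℂ) 1,
      HasSum (fun t => a (m * t) * u ^ t) (∑' t, a (m * t) * u ^ t) ∧
        ‖∑' t, a (m * t) * u ^ t‖ ≤ 1 := fun u hu => by
    obtain ⟨S, hS, hSle⟩ := exists_hasSum_coeff_mul_mul_pow_norm_le_one hsum hb hm hu
    exact ⟨hS.summable.hasSum, hS.tsum_eq ▸ hSle⟩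
  simpa using norm_coeff_one_le_one_sub_sq_s12 (fun u hu => (hslice u hu).1) fun u hu => (hslice u hu).2

theorem norm_coeff_zero_rpow_add_tsum_le_one
    (hsum : ∀ z ∈ ball (0 : ℂ) 1, HasSum (fun n => a n * z ^ n) (f z))
    (hb : ∀ z ∈ ball (0 : ℂ) 1, ‖f z‖ ≤ 1) {k : ℕ} (hk : k ≠ 0) {p : ℝ} (hp0 : 0 ≤ p) (hp2 : p ≤ 2)
    {r : ℝ} (hr0 : 0 ≤ r) (hr : r ^ k ≤ p / (2 + p)) :
    ‖a 0‖ ^ p + ∑' n, ‖a (k * (n + 1))‖ * r ^ (k * (n + 1)) ≤ 1 := by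
  have hW : ∀ n, ‖a (k * (n + 1))‖ ≤ 1 - ‖a 0‖ ^ 2 := fun n =>
    norm_coeff_le_one_sub_sq hsum hb (by positivity)
  have hρ1 : r ^ k < 1 := hr.trans_lt ((div_lt_one (by linarith)).mpr (by linarith))
  have hρ : r ^ k / (1 - r ^ k) ≤ p / 2 := by
    rw [div_le_div_iff₀ (by linarith) two_pos]
    rw [le_div_iff₀ (by linarith)] at hr
    linarith
  calc ‖a 0‖ ^ p + ∑' n, ‖a (k * (n + 1))‖ * r ^ (k * (n + 1))
      = ‖a 0‖ ^ p + ∑' n, ‖a (k * (n + 1))‖ * (r ^ k) ^ (n + 1) := by simp_rw [pow_mul]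
    _ ≤ (1 - p / 2 * (1 - ‖a 0‖ ^ 2)) + (1 - ‖a 0‖ ^ 2) * (r ^ k / (1 - r ^ k)) :=
        add_le_add (Real.rpow_le_one_sub_mul_one_sub_sq (norm_nonneg _) hp0 hp2)
          (tsum_mul_pow_succ_le (fun n => norm_nonneg _) hW (by positivity) hρ1)
    _ ≤ (1 - p / 2 * (1 - ‖a 0‖ ^ 2)) + (1 - ‖a 0‖ ^ 2) * (p / 2) := by
        gcongr; exact (norm_nonneg _).trans (hW 0)
    _ = 1 := by ring

end Bounded

theorem hasSum_ite_dvd_mul_pow {R : Type*} [Semiring R] [TopologicalSpace R] {c : ℕ → R}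
    {s z : R} {k : ℕ} (hk : k ≠ 0) (h : HasSum (fun t => c t * (z ^ k) ^ t) s) :
    HasSum (fun n => (if k ∣ n then c (n / k) else 0) * z ^ n) s := by
  have hinj : Function.Injective (k * ·) := mul_right_injective₀ hk
  refine (hinj.hasSum_iff fun n hn => ?_).mp ?_
  · rw [if_neg fun ⟨t, ht⟩ => hn ⟨t, ht.symm⟩, zero_mul]
  · refine h.congr_fun fun t => ?_
    simp [Nat.mul_div_cancel_left t (Nat.pos_of_ne_zero hk), pow_mul]

def mobiusCoeff (a : ℂ) : ℕ → ℂ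
  | 0 => a
  | n + 1 => -(1 - a ^ 2) * a ^ n

theorem hasSum_mobiusCoeff_mul_pow {a w : ℂ} (h : ‖a * w‖ < 1) :
    HasSum (fun n => mobiusCoeff a n * w ^ n) ((a - w) / (1 - a * w)) := by
  have hne : 1 - a * w ≠ 0 := fun h0 => by simp [← sub_eq_zero.mp h0] at h
  have htail : HasSum (fun n => -(1 - a ^ 2) * w * (a * w) ^ n)
      (-(1 - a ^ 2) * w * (1 - a * w)⁻¹) :=
    (hasSum_geometric_of_norm_lt_one h).mul_left _
  have hval : (a - w) / (1 - a * w) - ∑ i ∈ range 1, mobiusCoeff a i * w ^ i =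
      -(1 - a ^ 2) * w * (1 - a * w)⁻¹ := by
    simp only [sum_range_one, mobiusCoeff, pow_zero, mul_one]
    field_simp
    ring
  rw [← hasSum_nat_add_iff' 1, hval]
  exact htail.congr_fun fun n => by simp only [mobiusCoeff, pow_succ]; ring

theorem exists_rpow_add_mul_div_gt_one {p ρ : ℝ} (hp : 0 < p) (hρ : p / (2 + p) < ρ) (hρ1 : ρ < 1) :
    ∃ a ∈ Set.Ioo (0 : ℝ) 1, 1 < a ^ p + (1 - a ^ 2) * ρ / (1 - a * ρ) := by
  set F : ℝ → ℝ := fun a => a ^ p + (1 - a ^ 2) * ρ / (1 - a * ρ)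
  have hρ1' : (1 : ℝ) - ρ ≠ 0 := by linarith
  have hF1 : F 1 = 1 := by simp [F]
  have hF' : HasDerivAt F (p - 2 * ρ / (1 - ρ)) 1 := by
    have h := (Real.hasDerivAt_rpow_const (x := 1) (p := p) (Or.inl one_ne_zero)).add
      ((((hasDerivAt_pow 2 1).const_sub 1).mul_const ρ).div
        (((hasDerivAt_id 1).mul_const ρ).const_sub 1) (by simpa using hρ1'))
    refine h.congr_deriv ?_
    simp only [id, Real.one_rpow, one_pow, one_mul, Nat.cast_ofNat]
    field_simp
    ring
  have hneg : p - 2 * ρ / (1 - ρ) < 0 := by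
    rw [sub_neg, lt_div_iff₀ (by linarith)]
    rw [div_lt_iff₀ (by linarith)] at hρ
    linarith
  have hslope : ∀ᶠ a in 𝓝[<] 1, slope F 1 a < 0 :=
    ((hasDerivAt_iff_tendsto_slope.mp hF').mono_left (nhdsLT_le_nhdsNE 1)).eventually
      (gt_mem_nhds hneg)
  obtain ⟨a, hs, ha⟩ := (hslope.and (Ioo_mem_nhdsLT zero_lt_one)).exists
  refine ⟨a, ha, ?_⟩
  rw [slope_def_field, hF1, div_neg_iff] at hs
  rcases hs with ⟨h, -⟩ | ⟨-, h⟩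
  · exact sub_pos.mp h
  · linarith [ha.2]

section Extremal

variable {k : ℕ} {a : ℝ}

theorem norm_ofReal_mul_pow_lt_one (ha0 : 0 ≤ a) (ha1 : a < 1) (hk : k ≠ 0) {z : ℂ}
    (hz : z ∈ ball (0 : ℂ) 1) : ‖(a : ℂ) * z ^ k‖ < 1 := by
  rw [mem_ball_zero_iff] at hz
  rw [norm_mul, norm_pow, norm_real, Real.norm_of_nonneg ha0]
  nlinarith [pow_lt_one₀ (norm_nonneg z) hz hk, pow_nonneg (norm_nonneg z) k]

theorem hasSum_ite_dvd_mobiusCoeff_mul_pow (ha0 : 0 ≤ a) (ha1 : a < 1) (hk : k ≠ 0) {z : ℂ}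
    (hz : z ∈ ball (0 : ℂ) 1) :
    HasSum (fun n => (if k ∣ n then mobiusCoeff a (n / k) else 0) * z ^ n)
      ((a - z ^ k) / (1 - a * z ^ k)) :=
  hasSum_ite_dvd_mul_pow hk (hasSum_mobiusCoeff_mul_pow (norm_ofReal_mul_pow_lt_one ha0 ha1 hk hz))

theorem analyticOn_mobius_pow (ha0 : 0 ≤ a) (ha1 : a < 1) (hk : k ≠ 0) :
    AnalyticOn ℂ (fun z : ℂ => (a - z ^ k) / (1 - a * z ^ k)) (ball (0 : ℂ) 1) := by
  refine (analyticOn_const.sub (analyticOn_id.pow k)).div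
    (analyticOn_const.sub (analyticOn_const.mul (analyticOn_id.pow k))) fun z hz h => ?_
  have := norm_ofReal_mul_pow_lt_one ha0 ha1 hk hz
  rw [← sub_eq_zero.mp h, norm_one] at this
  exact this.false

theorem norm_mobius_pow_le_one (ha0 : 0 ≤ a) (ha1 : a < 1) {z : ℂ} (hz : z ∈ ball (0 : ℂ) 1) :
    ‖((a : ℂ) - z ^ k) / (1 - a * z ^ k)‖ ≤ 1 := by
  have hzk : ‖z ^ k‖ ≤ 1 := by
    rw [norm_pow]; exact pow_le_one₀ (norm_nonneg z) (mem_ball_zero_iff.mp hz).le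
  have ha : ‖(a : ℂ)‖ ≤ 1 := by rw [norm_real, Real.norm_of_nonneg ha0]; exact ha1.le
  have := norm_sub_le_norm_one_sub_conj_mul ha hzk
  rw [conj_ofReal] at this
  rw [norm_div, norm_sub_rev]
  exact div_le_one_of_le₀ this (norm_nonneg _)

theorem tsum_norm_mobiusCoeff_succ_mul_pow (ha0 : 0 ≤ a) (ha1 : a < 1) {ρ : ℝ} (hρ0 : 0 ≤ ρ)
    (hρ1 : ρ < 1) :
    ∑' n, ‖mobiusCoeff a (n + 1)‖ * ρ ^ (n + 1) = (1 - a ^ 2) * ρ / (1 - a * ρ) := by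
  have haρ : a * ρ < 1 := by nlinarith
  have hterm : ∀ n, ‖mobiusCoeff a (n + 1)‖ * ρ ^ (n + 1) = (1 - a ^ 2) * ρ * (a * ρ) ^ n := by
    intro n
    have hcoeff : 0 ≤ (1 - a ^ 2) * a ^ n :=
      mul_nonneg (sub_nonneg.mpr (pow_le_one₀ ha0 ha1.le)) (pow_nonneg ha0 n)
    rw [mobiusCoeff, ← ofReal_pow, ← ofReal_one, ← ofReal_sub, ← ofReal_neg, ← ofReal_pow,
      ← ofReal_mul, norm_real, Real.norm_of_nonpos (by linarith)]
    ring
  rw [tsum_congr hterm, tsum_mul_left, tsum_geometric_of_lt_one (by positivity) haρ, div_eq_mul_inv]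

end Extremal

/-- For `f ∈ 𝓑`, integer `k ≥ 1`, `p ∈ (0,2]`:
`|a₀|^p + ∑_{n≥1} |a_{kn}| r^{kn} ≤ 1` for `r ≤ (p/(2+p))^{1/k}`, and this is sharp. -/
theorem bohr_lacunary (k : ℕ) (hk : 1 ≤ k) (p : ℝ) (hp : p ∈ Set.Ioc (0 : ℝ) 2) :
    (∀ (f : ℂ → ℂ) (a : ℕ → ℂ),
      (∀ z ∈ ball (0 : ℂ) 1, HasSum (fun n => a n * z ^ n) (f z)) →
      AnalyticOn ℂ f (ball (0 : ℂ) 1) →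
      (∀ z ∈ ball (0 : ℂ) 1, ‖f z‖ ≤ 1) →
      ∀ r : ℝ, 0 ≤ r → r ≤ (p / (2 + p)) ^ ((1 : ℝ) / k) →
        ‖a 0‖ ^ p +
          ∑' n, ‖a (k * (n + 1))‖ * r ^ (k * (n + 1)) ≤ 1) ∧
    (∀ r : ℝ, (p / (2 + p)) ^ ((1 : ℝ) / k) < r → r < 1 →
      ∃ (f : ℂ → ℂ) (a : ℕ → ℂ),
        (∀ z ∈ ball (0 : ℂ) 1, HasSum (fun n => a n * z ^ n) (f z)) ∧
        AnalyticOn ℂ f (ball (0 : ℂ) 1) ∧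
        (∀ z ∈ ball (0 : ℂ) 1, ‖f z‖ ≤ 1) ∧
        1 < ‖a 0‖ ^ p +
          ∑' n, ‖a (k * (n + 1))‖ * r ^ (k * (n + 1))) := by
  obtain ⟨hp0, hp2⟩ := hp
  have hk0 : k ≠ 0 := by omega
  have hx : 0 ≤ p / (2 + p) := by positivity
  have hkpos : (0 : ℝ) < k := by positivity
  refine ⟨fun f a hsum _ hb r hr0 hr => ?_, fun r hr hr1 => ?_⟩
  · rw [one_div, Real.le_rpow_inv_iff_of_pos hr0 hx hkpos, Real.rpow_natCast] at hr
    exact norm_coeff_zero_rpow_add_tsum_le_one hsum hb hk0 hp0.le hp2 hr0 hr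
  · have hr0 : 0 < r := (Real.rpow_nonneg hx _).trans_lt hr
    rw [one_div, Real.rpow_inv_lt_iff_of_pos hx hr0.le hkpos, Real.rpow_natCast] at hr
    obtain ⟨c, ⟨hc0, hc1⟩, hgt⟩ :=
      exists_rpow_add_mul_div_gt_one hp0 hr (pow_lt_one₀ hr0.le hr1 hk0)
    refine ⟨_, fun n => if k ∣ n then mobiusCoeff c (n / k) else 0,
      fun z hz => hasSum_ite_dvd_mobiusCoeff_mul_pow hc0.le hc1 hk0 hz,
      analyticOn_mobius_pow hc0.le hc1 hk0, fun z hz => norm_mobius_pow_le_one hc0.le hc1 hz, ?_⟩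
    simp only [dvd_zero, dvd_mul_right, if_true, Nat.zero_div,
      Nat.mul_div_cancel_left _ (Nat.pos_of_ne_zero hk0), pow_mul]
    rwa [tsum_norm_mobiusCoeff_succ_mul_pow hc0.le hc1 (by positivity) (pow_lt_one₀ hr0.le hr1 hk0),
      mobiusCoeff, norm_real, Real.norm_of_nonneg hc0.le]
end
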